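/- arXiv:2103.12229 — 9 statements merged into one kernel-verified Lean document; each statement's English description precedes it below -/
import Mathlib

section
/- Fix δ ≥ 0 and consider U_δ(q) = q/(q+1)^{δ+1} - c·q with 0 < c < 1. At any critical point q* > 0 of U_δ (i.e., where (1 - q*δ)/(q*+1)^{δ+2} = c), we have q*·δ < 1, and the mixed partial derivative ∂²U/∂q∂δ = (-q + (qδ-1)·ln(q+1))/(q+1)^{δ+2} is negative at q*. -/
open Real

theorem mul_lt_one_of_div_rpow_eq_pos {δ c q : ℝ} (hc0 : 0 < c) (hq : 0 < q)
    (hcrit : (1 - q * δ) / (q + 1) ^ (δ + 2) = c) : q * δ < 1 := by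
  have hden : 0 < (q + 1) ^ (δ + 2) := rpow_pos_of_pos (by linarith) _
  have hnum : 0 < 1 - q * δ := (div_pos_iff_of_pos_right hden).mp (hcrit ▸ hc0)
  linarith

theorem neg_add_mul_log_div_rpow_neg {δ q : ℝ} (hq : 0 < q) (hqδ : q * δ < 1) :
    (-q + (q * δ - 1) * log (q + 1)) / (q + 1) ^ (δ + 2) < 0 := by
  have hlog : 0 < log (q + 1) := log_pos (by linarith)
  have hterm : (q * δ - 1) * log (q + 1) < 0 := mul_neg_of_neg_of_pos (by linarith) hlog
  exact div_neg_of_neg_of_pos (by linarith) (rpow_pos_of_pos (by linarith) _)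

theorem happy_mine_mixed_partial_neg_general (δ c q : ℝ)
    (hc0 : 0 < c) (hq : 0 < q)
    (hcrit : (1 - q * δ) / (q + 1) ^ (δ + 2) = c) :
    q * δ < 1 ∧
      (-q + (q * δ - 1) * Real.log (q + 1)) / (q + 1) ^ (δ + 2) < 0 := by
  have hqδ : q * δ < 1 := mul_lt_one_of_div_rpow_eq_pos hc0 hq hcrit
  exact ⟨hqδ, neg_add_mul_log_div_rpow_neg hq hqδ⟩

/-- At any critical point `q* > 0` of `U_δ q = q/(q+1)^(δ+1) - c*q` (with
`0 < c < 1`, `δ ≥ 0`), i.e. where `(1 - q*δ)/(q*+1)^(δ+2) = c`, we have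
`q*·δ < 1` and the mixed partial `(-q + (qδ-1)·ln(q+1))/(q+1)^(δ+2)` is
negative at `q*`. -/
theorem happy_mine_mixed_partial_neg (δ c q : ℝ) (hδ : 0 ≤ δ)
    (hc0 : 0 < c) (hc1 : c < 1) (hq : 0 < q)
    (hcrit : (1 - q * δ) / (q + 1) ^ (δ + 2) = c) :
    q * δ < 1 ∧
      (-q + (q * δ - 1) * Real.log (q + 1)) / (q + 1) ^ (δ + 2) < 0 :=
  happy_mine_mixed_partial_neg_general δ c q hc0 hq hcrit
end

section
/- Let c₁ ≤ c₂ be positive reals with c₁ + c₂ > 1. Then the strategy profile q_i = (1/(c₁+c₂))·(1 - c_i/(c₁+c₂)) for i = 1,2 satisfies q₁ + q₂ = 1/(c₁+c₂) < 1, each q_i ≥ 0, and each miner's utility derivative ∂U_i/∂q_i = (q₁+q₂-q_i)/(q₁+q₂)² - c_i equals zero whenever q_i > 0. -/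
noncomputable def equilibriumHashrate (s c : ℝ) : ℝ := 1 / s * (1 - c / s)

/-- `∂Uᵢ/∂qᵢ` for `Uᵢ = qᵢ/Q - cᵢ·qᵢ`, where `Q` is the total hashrate. -/
noncomputable def marginalUtility (total q c : ℝ) : ℝ := (total - q) / total ^ 2 - c

theorem equilibriumHashrate_add_equilibriumHashrate {c₁ c₂ : ℝ} (hs : c₁ + c₂ ≠ 0) :
    equilibriumHashrate (c₁ + c₂) c₁ + equilibriumHashrate (c₁ + c₂) c₂ = 1 / (c₁ + c₂) := by
  unfold equilibriumHashrate
  field_simp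
  ring

theorem equilibriumHashrate_nonneg {s c : ℝ} (hs : 0 < s) (hc : c ≤ s) :
    0 ≤ equilibriumHashrate s c :=
  mul_nonneg (one_div_nonneg.2 hs.le) (sub_nonneg.2 ((div_le_one hs).2 hc))

theorem marginalUtility_equilibriumHashrate {s : ℝ} (hs : s ≠ 0) (c : ℝ) :
    marginalUtility (1 / s) (equilibriumHashrate s c) c = 0 := by
  unfold marginalUtility equilibriumHashrate
  field_simp
  ring

/-- For two miners with costs `0 < c₁ ≤ c₂` and `c₁ + c₂ > 1`, the profile
`qᵢ = (1/(c₁+c₂))·(1 - cᵢ/(c₁+c₂))` has total hashrate `1/(c₁+c₂) < 1`,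
nonnegative hashrates, and the utility derivatives vanish at any positive
hashrate. -/
theorem two_miner_interior_equilibrium (c₁ c₂ : ℝ) (h1 : 0 < c₁) (h12 : c₁ ≤ c₂)
    (hsum : 1 < c₁ + c₂)
    (q₁ q₂ : ℝ)
    (hq₁ : q₁ = (1 / (c₁ + c₂)) * (1 - c₁ / (c₁ + c₂)))
    (hq₂ : q₂ = (1 / (c₁ + c₂)) * (1 - c₂ / (c₁ + c₂))) :
    q₁ + q₂ = 1 / (c₁ + c₂) ∧ 1 / (c₁ + c₂) < 1 ∧ 0 ≤ q₁ ∧ 0 ≤ q₂ ∧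
      (0 < q₁ → (q₁ + q₂ - q₁) / (q₁ + q₂) ^ 2 - c₁ = 0) ∧
      (0 < q₂ → (q₁ + q₂ - q₂) / (q₁ + q₂) ^ 2 - c₂ = 0) := by
  have hs : 0 < c₁ + c₂ := one_pos.trans hsum
  have htotal : q₁ + q₂ = 1 / (c₁ + c₂) := by
    rw [hq₁, hq₂]
    exact equilibriumHashrate_add_equilibriumHashrate hs.ne'
  refine ⟨htotal, (div_lt_one hs).2 hsum, ?_, ?_, fun _ => ?_, fun _ => ?_⟩
  · rw [hq₁]
    exact equilibriumHashrate_nonneg hs (by linarith)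
  · rw [hq₂]
    exact equilibriumHashrate_nonneg hs (by linarith)
  · rw [htotal, hq₁]
    exact marginalUtility_equilibriumHashrate hs.ne' c₁
  · rw [htotal, hq₂]
    exact marginalUtility_equilibriumHashrate hs.ne' c₂
end

section
/- Let c₁ ≤ c₂ with c₁ + c₂ ≤ 1 and c₁, c₂ > 0. For any α, β ≥ 0 with α + β = 1, (1-c₁)/2 ≤ α ≤ 1-c₁, and (1-c₂)/2 ≤ β ≤ 1-c₂, the profile (α, β) is a Nash equilibrium of the two-miner HaPPY-Mine game with Q = δ = 1; moreover any equilibrium with total hashrate 1 satisfies these bounds. -/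
/-- Utility of a miner with cost `c` and hashrate `x`, the other miner having
hashrate `y`, in the two-miner HaPPY-Mine game with `Q = δ = 1`. -/
noncomputable def happyUtil2 (c x y : ℝ) : ℝ :=
  if x + y ≤ 1 then x / (x + y) - c * x else x / (x + y) ^ 2 - c * x

/-!
Against an opponent with hashrate `β`, write `s` for the total hashrate. Compared with the
response `1 - β` (total exactly `1`), the gain of any other response factors as
`(1 - s) (β - c s) / s` below total `1` and as `(s - 1) q(s) / s²` above it, with
`q(1) = 1 + c - 2β`. So `1 - β` is a best response iff `β - c ≥ 0` and `1 + c - 2β ≥ 0`: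
sufficiency is a sign check, and if either sign is wrong, totals close to `1` on the
corresponding side do strictly better.
-/

open Filter Topology

def IsBestResponse (c x y : ℝ) : Prop :=
  ∀ x' : ℝ, 0 ≤ x' → happyUtil2 c x' y ≤ happyUtil2 c x y

section BestResponse

variable {c β s : ℝ}

lemma happyUtil2_one_sub_sub_of_le (hs₀ : 0 < s) (hs₁ : s ≤ 1) :
    happyUtil2 c (1 - β) β - happyUtil2 c (s - β) β = (1 - s) * (β - c * s) / s := by
  rw [happyUtil2, happyUtil2, sub_add_cancel, sub_add_cancel, if_pos le_rfl, if_pos hs₁]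
  field_simp
  ring

lemma happyUtil2_one_sub_sub_of_gt (hs : 1 < s) :
    happyUtil2 c (1 - β) β - happyUtil2 c (s - β) β =
      (s - 1) * ((1 + c - 2 * β) + (s - 1) * (2 * c + 1 - β) + c * (s - 1) ^ 2) / s ^ 2 := by
  rw [happyUtil2, happyUtil2, sub_add_cancel, sub_add_cancel, if_pos le_rfl, if_neg hs.not_ge]
  field_simp
  ring

lemma isBestResponse_one_sub (hc : 0 < c) (hcβ : c ≤ β) (hβc : 2 * β - 1 ≤ c) :
    IsBestResponse c (1 - β) β := by
  intro x hx
  rw [← sub_nonneg, ← add_sub_cancel_right x β]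
  rcases le_or_gt (x + β) 1 with hs | hs
  · rw [happyUtil2_one_sub_sub_of_le (by linarith) hs]
    exact div_nonneg (mul_nonneg (by linarith) (by nlinarith)) (by linarith)
  · rw [happyUtil2_one_sub_sub_of_gt hs]
    have hd : 0 ≤ x + β - 1 := by linarith
    have hq : 0 ≤ (1 + c - 2 * β) + (x + β - 1) * (2 * c + 1 - β) + c * (x + β - 1) ^ 2 := by
      have := mul_nonneg hd (by linarith : 0 ≤ 2 * c + 1 - β)
      nlinarith [sq_nonneg (x + β - 1)]
    exact div_nonneg (mul_nonneg hd hq) (sq_nonneg _)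

lemma le_of_isBestResponse_one_sub (hc : c ≤ 1) (h : IsBestResponse c (1 - β) β) : c ≤ β := by
  by_contra! hβc
  have hfactor : ∀ᶠ s in 𝓝 1, β - c * s < 0 :=
    (Continuous.tendsto' (by fun_prop) 1 (β - c) (by simp)).eventually_lt_const (by linarith)
  have hnear : ∀ᶠ s in 𝓝 1, β < s ∧ 0 < s ∧ β - c * s < 0 :=
    (eventually_gt_nhds (by linarith)).and ((eventually_gt_nhds one_pos).and hfactor)
  obtain ⟨s, ⟨hβs, hs₀, hneg⟩, hs₁ : s < 1⟩ :=
    ((hnear.filter_mono nhdsWithin_le_nhds).and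
      (eventually_mem_nhdsWithin (s := Set.Iio 1))).exists
  have hgain := sub_nonneg.2 (h (s - β) (by linarith))
  rw [happyUtil2_one_sub_sub_of_le hs₀ hs₁.le] at hgain
  have : (1 - s) * (β - c * s) / s < 0 :=
    div_neg_of_neg_of_pos (mul_neg_of_pos_of_neg (by linarith) hneg) hs₀
  linarith

lemma two_mul_sub_one_le_of_isBestResponse_one_sub (hβ : β ≤ 1)
    (h : IsBestResponse c (1 - β) β) : 2 * β - 1 ≤ c := by
  by_contra! hβc
  have hfactor : ∀ᶠ s in 𝓝 1,
      (1 + c - 2 * β) + (s - 1) * (2 * c + 1 - β) + c * (s - 1) ^ 2 < 0 :=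
    (Continuous.tendsto' (by fun_prop) 1 (1 + c - 2 * β) (by simp)).eventually_lt_const
      (by linarith)
  obtain ⟨s, hneg, hs₁ : 1 < s⟩ :=
    ((hfactor.filter_mono nhdsWithin_le_nhds).and
      (eventually_mem_nhdsWithin (s := Set.Ioi 1))).exists
  have hgain := sub_nonneg.2 (h (s - β) (by linarith))
  rw [happyUtil2_one_sub_sub_of_gt hs₁] at hgain
  have : (s - 1) * ((1 + c - 2 * β) + (s - 1) * (2 * c + 1 - β) + c * (s - 1) ^ 2) / s ^ 2 < 0 :=
    div_neg_of_neg_of_pos (mul_neg_of_pos_of_neg (by linarith) hneg) (by positivity)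
  linarith

theorem isBestResponse_one_sub_iff (hc₀ : 0 < c) (hc₁ : c ≤ 1) (hβ : β ≤ 1) :
    IsBestResponse c (1 - β) β ↔ c ≤ β ∧ 2 * β - 1 ≤ c :=
  ⟨fun h => ⟨le_of_isBestResponse_one_sub hc₁ h,
      two_mul_sub_one_le_of_isBestResponse_one_sub hβ h⟩,
    fun h => isBestResponse_one_sub hc₀ h.1 h.2⟩

end BestResponse

theorem two_miner_equilibria_at_Q_general (c₁ c₂ : ℝ) (h1 : 0 < c₁) (h2 : 0 < c₂)
    (hsum : c₁ + c₂ ≤ 1) :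
    (∀ α β : ℝ, 0 ≤ α → 0 ≤ β → α + β = 1 →
      (1 - c₁) / 2 ≤ α → α ≤ 1 - c₁ → (1 - c₂) / 2 ≤ β → β ≤ 1 - c₂ →
      (∀ x : ℝ, 0 ≤ x → happyUtil2 c₁ x β ≤ happyUtil2 c₁ α β) ∧
      (∀ y : ℝ, 0 ≤ y → happyUtil2 c₂ y α ≤ happyUtil2 c₂ β α)) ∧
    (∀ α β : ℝ, 0 ≤ α → 0 ≤ β → α + β = 1 →
      (∀ x : ℝ, 0 ≤ x → happyUtil2 c₁ x β ≤ happyUtil2 c₁ α β) →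
      (∀ y : ℝ, 0 ≤ y → happyUtil2 c₂ y α ≤ happyUtil2 c₂ β α) →
      (1 - c₁) / 2 ≤ α ∧ α ≤ 1 - c₁ ∧ (1 - c₂) / 2 ≤ β ∧ β ≤ 1 - c₂) := by
  have hc₁ : c₁ ≤ 1 := by linarith
  have hc₂ : c₂ ≤ 1 := by linarith
  refine ⟨fun α β hα hβ hab _ _ _ _ => ⟨?_, ?_⟩,
    fun α β hα hβ hab hbr₁ hbr₂ => ?_⟩
  · obtain rfl : α = 1 - β := by linarith
    exact (isBestResponse_one_sub_iff h1 hc₁ (by linarith)).2 ⟨by linarith, by linarith⟩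
  · obtain rfl : β = 1 - α := by linarith
    exact (isBestResponse_one_sub_iff h2 hc₂ (by linarith)).2 ⟨by linarith, by linarith⟩
  · rw [show α = 1 - β by linarith] at hbr₁
    rw [show β = 1 - α by linarith] at hbr₂
    obtain ⟨_, _⟩ := (isBestResponse_one_sub_iff h1 hc₁ (by linarith)).1 hbr₁
    obtain ⟨_, _⟩ := (isBestResponse_one_sub_iff h2 hc₂ (by linarith)).1 hbr₂
    exact ⟨by linarith, by linarith, by linarith, by linarith⟩

/-- For costs `0 < c₁ ≤ c₂` with `c₁ + c₂ ≤ 1`, any profile `(α, β)` with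
`α + β = 1`, `(1-c₁)/2 ≤ α ≤ 1-c₁` and `(1-c₂)/2 ≤ β ≤ 1-c₂` is a Nash
equilibrium; moreover any Nash equilibrium with total hashrate `1` satisfies
these bounds. -/
theorem two_miner_equilibria_at_Q (c₁ c₂ : ℝ) (h1 : 0 < c₁) (h2 : 0 < c₂)
    (h12 : c₁ ≤ c₂) (hsum : c₁ + c₂ ≤ 1) :
    (∀ α β : ℝ, 0 ≤ α → 0 ≤ β → α + β = 1 →
      (1 - c₁) / 2 ≤ α → α ≤ 1 - c₁ → (1 - c₂) / 2 ≤ β → β ≤ 1 - c₂ →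
      (∀ x : ℝ, 0 ≤ x → happyUtil2 c₁ x β ≤ happyUtil2 c₁ α β) ∧
      (∀ y : ℝ, 0 ≤ y → happyUtil2 c₂ y α ≤ happyUtil2 c₂ β α)) ∧
    (∀ α β : ℝ, 0 ≤ α → 0 ≤ β → α + β = 1 →
      (∀ x : ℝ, 0 ≤ x → happyUtil2 c₁ x β ≤ happyUtil2 c₁ α β) →
      (∀ y : ℝ, 0 ≤ y → happyUtil2 c₂ y α ≤ happyUtil2 c₂ β α) →
      (1 - c₁) / 2 ≤ α ∧ α ≤ 1 - c₁ ∧ (1 - c₂) / 2 ≤ β ∧ β ≤ 1 - c₂) :=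
  two_miner_equilibria_at_Q_general c₁ c₂ h1 h2 hsum
end

section
/- Let m > δ+1 miners have uniform cost c with 0 < c < (m-δ-1)/m. Then q_i = (1/m)·((m-δ-1)/(cm))^{1/(δ+1)} for every miner is an equilibrium of HaPPY-Mine with Q = 1, and the total hashrate ((m-δ-1)/(cm))^{1/(δ+1)} exceeds 1. -/
/-!
At a symmetric profile `qᵢ = H/m` the first-order condition `(H - (δ+1)H/m)/H^(δ+2) = c` reduces to
`H^(δ+1) = (m-δ-1)/(cm)`, so `H` is the `(δ+1)`-th root of that ratio. The cost bound
`c < (m-δ-1)/m` says exactly that the ratio exceeds `1`, hence so does its root.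
-/

lemma one_lt_div_mul_of_lt_div {m a c : ℝ} (hm : 0 < m) (hc0 : 0 < c) (hc : c < a / m) :
    1 < a / (c * m) := by
  rw [one_lt_div (mul_pos hc0 hm)]
  exact (lt_div_iff₀ hm).mp hc

lemma symmetric_marginal_utility_eq_zero {m δ c H : ℝ} (hm : m ≠ 0) (hH : 0 < H)
    (hroot : H ^ (δ + 1) = (m - δ - 1) / (c * m)) :
    (H - (δ + 1) * (H / m)) / H ^ (δ + 2) - c = 0 := by
  have hpow : H ^ (δ + 2) = H * ((m - δ - 1) / (c * m)) := by
    rw [show δ + 2 = 1 + (δ + 1) by ring, Real.rpow_add hH, Real.rpow_one, hroot]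
  have hratio : m - δ - 1 ≠ 0 := by
    intro h
    rw [h, zero_div] at hroot
    exact (Real.rpow_pos_of_pos hH _).ne' hroot
  rw [hpow]
  field_simp
  ring

/-- For `m > δ+1` miners with uniform cost `0 < c < (m-δ-1)/m`, the symmetric
profile `qᵢ = (1/m)·((m-δ-1)/(cm))^(1/(δ+1))` is an equilibrium of HaPPY-Mine
with `Q = 1`: the total hashrate `((m-δ-1)/(cm))^(1/(δ+1))` exceeds `1` and
each miner's utility derivative vanishes. -/
theorem uniform_cost_high_hashrate_equilibrium (m : ℕ) (δ c : ℝ) (hδ : 0 ≤ δ)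
    (hm : δ + 1 < (m : ℝ)) (hc0 : 0 < c) (hc : c < ((m : ℝ) - δ - 1) / m)
    (q H : ℝ)
    (hq : q = (1 / (m : ℝ)) * (((m : ℝ) - δ - 1) / (c * m)) ^ ((1 : ℝ) / (δ + 1)))
    (hH : H = m * q) :
    H = (((m : ℝ) - δ - 1) / (c * m)) ^ ((1 : ℝ) / (δ + 1)) ∧ 1 < H ∧
      (H - (δ + 1) * q) / H ^ (δ + 2) - c = 0 := by
  have hm0 : (0 : ℝ) < m := by linarith
  have hδ1 : 0 < δ + 1 := by linarith
  set A : ℝ := ((m : ℝ) - δ - 1) / (c * m)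
  have hA : 1 < A := one_lt_div_mul_of_lt_div hm0 hc0 hc
  have hHA : H = A ^ ((1 : ℝ) / (δ + 1)) := by
    rw [hH, hq]
    field_simp
  have hH1 : 1 < H := hHA ▸ Real.one_lt_rpow hA (by positivity)
  have hroot : H ^ (δ + 1) = A := by
    rw [hHA, one_div, Real.rpow_inv_rpow (by linarith) hδ1.ne']
  have hqH : q = H / m := by
    rw [hH]
    field_simp
  refine ⟨hHA, hH1, ?_⟩
  rw [hqH]
  exact symmetric_marginal_utility_eq_zero hm0.ne' (by linarith) hroot
end

section
/- Suppose an equilibrium of HaPPY-Mine has total hashrate exactly Q. Then every miner with cost c_i < 1/Q participates with hashrate satisfying (Q - c_i Q²)/(δ+1) ≤ q_i ≤ Q - c_i Q², and miners with c_i ≥ 1/Q have q_i = 0. -/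
/-!
Every claim is a single miner's first-order condition at `H = Q` solved for `qᵢ`. Since
`Q / Q² = 1 / Q`, a miner with `cᵢ < 1/Q` violates the non-participation condition, so `qᵢ > 0`
and both one-sided conditions give the two bounds. A miner with `cᵢ ≥ 1/Q` has `Q - cᵢQ² ≤ 0`,
so the left-derivative bound `qᵢ ≤ Q - cᵢQ²` rules out `qᵢ > 0`.
-/

section

variable {Q q c δ : ℝ}

lemma le_sub_mul_sq_of_left_deriv_nonneg (hQ : Q ≠ 0) (h : 0 ≤ (Q - q) / Q ^ 2 - c) :
    q ≤ Q - c * Q ^ 2 := by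
  have := (le_div_iff₀ (by positivity)).mp (sub_nonneg.mp h)
  linarith

lemma div_le_of_right_deriv_nonpos (hQ : Q ≠ 0) (hδ : 0 < δ + 1)
    (h : (Q - (δ + 1) * q) / Q ^ 2 - c ≤ 0) : (Q - c * Q ^ 2) / (δ + 1) ≤ q := by
  have := (div_le_iff₀ (by positivity)).mp (sub_nonpos.mp h)
  rw [div_le_iff₀ hδ]
  linarith

lemma inv_le_of_deriv_at_zero_nonpos (hQ : Q ≠ 0) (h : Q / Q ^ 2 - c ≤ 0) : 1 / Q ≤ c := by
  rwa [sq, div_mul_cancel_left₀ hQ, ← one_div, sub_nonpos] at h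

lemma sub_mul_sq_nonpos_of_inv_le (hQ : 0 < Q) (hc : 1 / Q ≤ c) : Q - c * Q ^ 2 ≤ 0 := by
  have := (div_le_iff₀ hQ).mp hc
  nlinarith

end

theorem equilibrium_at_Q_general (m : ℕ) (Q δ : ℝ) (hQ : 0 < Q) (hδ : 0 ≤ δ)
    (c q : Fin m → ℝ) (hq : ∀ i, 0 ≤ q i)
    (hleft : ∀ i, 0 < q i → 0 ≤ (Q - q i) / Q ^ 2 - c i)
    (hright : ∀ i, 0 < q i → (Q - (δ + 1) * q i) / Q ^ 2 - c i ≤ 0)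
    (hnon : ∀ i, q i = 0 → Q / Q ^ 2 - c i ≤ 0) :
    ∀ i, (c i < 1 / Q →
            0 < q i ∧ (Q - c i * Q ^ 2) / (δ + 1) ≤ q i ∧ q i ≤ Q - c i * Q ^ 2) ∧
         (1 / Q ≤ c i → q i = 0) := by
  intro i
  constructor
  · intro hci
    have hpos : 0 < q i := (hq i).lt_of_ne fun hzero =>
      hci.not_ge (inv_le_of_deriv_at_zero_nonpos hQ.ne' (hnon i hzero.symm))
    exact ⟨hpos, div_le_of_right_deriv_nonpos hQ.ne' (by linarith) (hright i hpos),
      le_sub_mul_sq_of_left_deriv_nonneg hQ.ne' (hleft i hpos)⟩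
  · intro hci
    by_contra hne
    have hpos : 0 < q i := (hq i).lt_of_ne' hne
    have := le_sub_mul_sq_of_left_deriv_nonneg hQ.ne' (hleft i hpos)
    linarith [sub_mul_sq_nonpos_of_inv_le hQ hci]

/-- At a HaPPY-Mine equilibrium with total hashrate exactly `Q`, every miner
with cost `cᵢ < 1/Q` participates with hashrate in
`[(Q - cᵢQ²)/(δ+1), Q - cᵢQ²]`, and miners with `cᵢ ≥ 1/Q` do not
participate. -/
theorem equilibrium_at_Q (m : ℕ) (Q δ : ℝ) (hQ : 0 < Q) (hδ : 0 ≤ δ)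
    (c q : Fin m → ℝ) (hc : ∀ i, 0 < c i) (hq : ∀ i, 0 ≤ q i)
    (hsum : ∑ i, q i = Q)
    (hleft : ∀ i, 0 < q i → 0 ≤ (Q - q i) / Q ^ 2 - c i)
    (hright : ∀ i, 0 < q i → (Q - (δ + 1) * q i) / Q ^ 2 - c i ≤ 0)
    (hnon : ∀ i, q i = 0 → Q / Q ^ 2 - c i ≤ 0) :
    ∀ i, (c i < 1 / Q →
            0 < q i ∧ (Q - c i * Q ^ 2) / (δ + 1) ≤ q i ∧ q i ≤ Q - c i * Q ^ 2) ∧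
         (1 / Q ≤ c i → q i = 0) :=
  equilibrium_at_Q_general m Q δ hQ hδ c q hq hleft hright hnon
end

section
/- In any HaPPY-Mine equilibrium with total hashrate H > Q, if miner i+1 participates (q_{i+1} > 0) then miner i also participates, where costs satisfy c_i ≤ c_{i+1}. -/
/-!
With `K = Q^δ / H^(δ+2) > 0`, the first-order conditions read `c_j = K (H - (δ+1) q_j)` for an
active miner and `c_j ≥ K H` for an idle one. So every active miner pays strictly less than `K H`
and every idle one at least `K H`; with sorted costs an idle miner cannot precede an active one.
-/

section MarginalUtility

variable {K a H q c : ℝ}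

lemma cost_lt_of_marginal_eq_zero (hK : 0 < K) (ha : 0 < a) (hq : 0 < q)
    (h : K * (H - a * q) - c = 0) : c < K * H := by
  nlinarith [mul_pos hK (mul_pos ha hq)]

lemma le_cost_of_marginal_nonpos_of_eq_zero (hq : q = 0)
    (h : K * (H - a * q) - c ≤ 0) : K * H ≤ c := by
  simpa [hq] using h

end MarginalUtility

theorem participation_downward_closed_general (m : ℕ) (Q δ : ℝ) (hQ : 0 < Q)
    (hδ : 0 ≤ δ) (c q : ℕ → ℝ)
    (hcmono : ∀ i j, i ≤ j → j < m → c i ≤ c j)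
    (hqnn : ∀ i, i < m → 0 ≤ q i)
    (H : ℝ) (hHQ : Q < H)
    (heq : ∀ i, i < m → 0 < q i →
      (Q ^ δ / H ^ (δ + 2)) * (H - (δ + 1) * q i) - c i = 0)
    (hineq : ∀ i, i < m → q i = 0 →
      (Q ^ δ / H ^ (δ + 2)) * (H - (δ + 1) * q i) - c i ≤ 0) :
    ∀ i, i + 1 < m → 0 < q (i + 1) → 0 < q i := by
  intro i hi1 hq1
  have hi : i < m := by omega
  have hK : 0 < Q ^ δ / H ^ (δ + 2) := by
    have hH : 0 < H := hQ.trans hHQ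
    positivity
  by_contra hqi
  have hqi0 : q i = 0 := le_antisymm (not_lt.1 hqi) (hqnn i hi)
  have hidle := le_cost_of_marginal_nonpos_of_eq_zero hqi0 (hineq i hi hqi0)
  have hactive := cost_lt_of_marginal_eq_zero hK (by linarith) hq1 (heq (i + 1) hi1 hq1)
  linarith [hcmono i (i + 1) i.le_succ hi1]

/-- In any HaPPY-Mine equilibrium with total hashrate `H > Q`, if miner `i+1`
participates then so does miner `i` (costs being sorted `cᵢ ≤ cᵢ₊₁`). -/
theorem participation_downward_closed (m : ℕ) (Q δ : ℝ) (hQ : 0 < Q)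
    (hδ : 0 ≤ δ) (c q : ℕ → ℝ)
    (hcmono : ∀ i j, i ≤ j → j < m → c i ≤ c j)
    (hcpos : ∀ i, i < m → 0 < c i)
    (hqnn : ∀ i, i < m → 0 ≤ q i)
    (H : ℝ) (hH : H = ∑ i ∈ Finset.range m, q i) (hHQ : Q < H)
    (heq : ∀ i, i < m → 0 < q i →
      (Q ^ δ / H ^ (δ + 2)) * (H - (δ + 1) * q i) - c i = 0)
    (hineq : ∀ i, i < m → q i = 0 →
      (Q ^ δ / H ^ (δ + 2)) * (H - (δ + 1) * q i) - c i ≤ 0) :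
    ∀ i, i + 1 < m → 0 < q (i + 1) → 0 < q i :=
  participation_downward_closed_general m Q δ hQ hδ c q hcmono hqnn H hHQ heq hineq
end

section
/- Suppose an equilibrium of HaPPY-Mine has total hashrate H > Q with exactly the first n miners participating (n > δ+1). Then H = (Q^δ(n-δ-1)/Σ_{i=1}^n c_i)^{1/(δ+1)}, and each participating miner has q_i = (H/(δ+1))·(1 - c_i·H^{δ+1}/Q^δ). -/
open Finset

/-! Each participant's first-order condition is linear in its own hashrate, which gives the formula
for `qᵢ`. Summing the conditions over the `n` participants and using `Σ qᵢ = H` eliminates the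
hashrates: `Σ cᵢ = Q^δ (n - δ - 1) / H^(δ+1)`, which is then solved for `H`. -/

lemma rpow_add_two_eq {H : ℝ} (hH : 0 < H) (δ : ℝ) : H ^ (δ + 2) = H ^ (δ + 1) * H := by
  rw [← Real.rpow_add_one hH.ne', add_assoc, one_add_one_eq_two]

lemma hashrate_eq_of_first_order_condition {K H δ q c : ℝ} (hK : K ≠ 0) (hH : 0 < H)
    (hδ : δ + 1 ≠ 0) (h : K / H ^ (δ + 2) * (H - (δ + 1) * q) - c = 0) :
    q = H / (δ + 1) * (1 - c * H ^ (δ + 1) / K) := by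
  have hHδ : H ^ (δ + 1) ≠ 0 := (Real.rpow_pos_of_pos hH _).ne'
  rw [rpow_add_two_eq hH δ] at h
  field_simp at h ⊢
  linear_combination (-1 : ℝ) * h

lemma sum_cost_eq_of_first_order_conditions {K H δ : ℝ} {n : ℕ} {c q : ℕ → ℝ} (hH : 0 < H)
    (hsum : ∑ i ∈ range n, q i = H)
    (h : ∀ i < n, K / H ^ (δ + 2) * (H - (δ + 1) * q i) - c i = 0) :
    ∑ i ∈ range n, c i = K * (n - δ - 1) / H ^ (δ + 1) := by
  have hHδ : H ^ (δ + 1) ≠ 0 := (Real.rpow_pos_of_pos hH _).ne'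
  calc ∑ i ∈ range n, c i
      = ∑ i ∈ range n, K / H ^ (δ + 2) * (H - (δ + 1) * q i) :=
        sum_congr rfl fun i hi => by linarith [h i (mem_range.mp hi)]
    _ = K / H ^ (δ + 2) * (n * H - (δ + 1) * H) := by
        rw [← mul_sum, sum_sub_distrib, ← mul_sum, hsum, sum_const, card_range, nsmul_eq_mul]
    _ = K * (n - δ - 1) / H ^ (δ + 1) := by
        rw [rpow_add_two_eq hH δ]
        field_simp
        ring

theorem equilibrium_above_Q_formulas_general (m n : ℕ) (hnm : n ≤ m) (Q δ : ℝ)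
    (hQ : 0 < Q) (hδ : 0 ≤ δ) (hn : δ + 1 < (n : ℝ)) (c q : ℕ → ℝ)
    (hnon : ∀ i, n ≤ i → i < m → q i = 0)
    (H : ℝ) (hH : H = ∑ i ∈ Finset.range m, q i) (hHQ : Q < H)
    (heq : ∀ i, i < n →
      (Q ^ δ / H ^ (δ + 2)) * (H - (δ + 1) * q i) - c i = 0) :
    H = (Q ^ δ * ((n : ℝ) - δ - 1) / ∑ i ∈ Finset.range n, c i)
          ^ ((1 : ℝ) / (δ + 1)) ∧
    ∀ i, i < n → q i = (H / (δ + 1)) * (1 - c i * H ^ (δ + 1) / Q ^ δ) := by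
  have hH0 : 0 < H := hQ.trans hHQ
  have hQδ : Q ^ δ ≠ 0 := (Real.rpow_pos_of_pos hQ δ).ne'
  have hδ1 : δ + 1 ≠ 0 := by positivity
  have hsum : ∑ i ∈ range n, q i = H := by
    rw [hH]
    exact sum_subset (range_subset_range.mpr hnm) fun i hi hni =>
      hnon i (by simpa using hni) (by simpa using hi)
  refine ⟨?_, fun i hi => hashrate_eq_of_first_order_condition hQδ hH0 hδ1 (heq i hi)⟩
  have hHδ : H ^ (δ + 1) ≠ 0 := (Real.rpow_pos_of_pos hH0 _).ne'
  have hnδ : (n : ℝ) - δ - 1 ≠ 0 := by linarith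
  rw [sum_cost_eq_of_first_order_conditions hH0 hsum heq,
    show Q ^ δ * (n - δ - 1) / (Q ^ δ * (n - δ - 1) / H ^ (δ + 1)) = H ^ (δ + 1) by field_simp,
    one_div, Real.rpow_rpow_inv hH0.le hδ1]

/-- If a HaPPY-Mine equilibrium has total hashrate `H > Q` with exactly the
first `n` miners participating (`n > δ+1`), then
`H = (Q^δ (n-δ-1) / Σ_{i<n} cᵢ)^(1/(δ+1))` and each participant has
`qᵢ = (H/(δ+1)) (1 - cᵢ H^(δ+1)/Q^δ)`. -/
theorem equilibrium_above_Q_formulas (m n : ℕ) (hnm : n ≤ m) (Q δ : ℝ)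
    (hQ : 0 < Q) (hδ : 0 ≤ δ) (hn : δ + 1 < (n : ℝ)) (c q : ℕ → ℝ)
    (hcpos : ∀ i, i < m → 0 < c i)
    (hpart : ∀ i, i < n → 0 < q i) (hnon : ∀ i, n ≤ i → i < m → q i = 0)
    (H : ℝ) (hH : H = ∑ i ∈ Finset.range m, q i) (hHQ : Q < H)
    (heq : ∀ i, i < n →
      (Q ^ δ / H ^ (δ + 2)) * (H - (δ + 1) * q i) - c i = 0) :
    H = (Q ^ δ * ((n : ℝ) - δ - 1) / ∑ i ∈ Finset.range n, c i)
          ^ ((1 : ℝ) / (δ + 1)) ∧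
    ∀ i, i < n → q i = (H / (δ + 1)) * (1 - c i * H ^ (δ + 1) / Q ^ δ) :=
  equilibrium_above_Q_formulas_general m n hnm Q δ hQ hδ hn c q hnon H hH hHQ heq
end

section
/- If c* > 1/Q (where X(c*) = 1) then there is no HaPPY-Mine equilibrium with total hashrate equal to Q. Specifically, letting n be the number of miners with c_i < 1/Q, the conditions X(c*) = 1 with c* > 1/Q imply (n-1)/Q < Σ_{i=1}^n c_i, while an equilibrium at total hashrate Q would require Σ_{i=1}^n c_i ≤ (n-1)/Q. -/
/-!
Let `S` be the set of miners with `cᵢ < 1/Q` and `n = |S|`. Dropping the positive parts outside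
`S` and the truncation inside it, `X(c*) = 1` gives `n - Σ_S cᵢ / c* ≤ 1`, i.e.
`(n - 1) c* ≤ Σ_S cᵢ`, and `c* > 1/Q` makes this `(n - 1)/Q < Σ_S cᵢ` (for `n ≤ 1` use `cᵢ > 0`).
Summing the bounds `qᵢ ≤ Q - cᵢQ²` over `S` then gives `Σ qᵢ ≤ nQ - Q² Σ_S cᵢ < Q`.
-/

open Finset

variable {ι : Type*}

theorem card_sub_one_mul_le_sum_of_sum_max_le_one [Fintype ι] {c : ι → ℝ} {cstar : ℝ}
    (hcstar : 0 < cstar) (hX : ∑ i, max (1 - c i / cstar) 0 ≤ 1) (s : Finset ι) :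
    ((#s : ℝ) - 1) * cstar ≤ ∑ i ∈ s, c i := by
  have hs : ∑ i ∈ s, (1 - c i / cstar) ≤ 1 :=
    calc ∑ i ∈ s, (1 - c i / cstar)
        ≤ ∑ i ∈ s, max (1 - c i / cstar) 0 := sum_le_sum fun i _ => le_max_left _ _
      _ ≤ ∑ i, max (1 - c i / cstar) 0 :=
          sum_le_sum_of_subset_of_nonneg (subset_univ s) fun i _ _ => le_max_right _ _
      _ ≤ 1 := hX
  rw [sum_sub_distrib, ← sum_div, sum_const, nsmul_one] at hs
  rw [← le_div_iff₀ hcstar]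
  linarith

theorem card_sub_one_div_lt_sum [Fintype ι] {c : ι → ℝ} {cstar Q : ℝ} (hQ : 0 < Q)
    (hcstar : 0 < cstar) (hX : ∑ i, max (1 - c i / cstar) 0 ≤ 1) (hQcstar : 1 / Q < cstar)
    {s : Finset ι} (hpos : ∀ i ∈ s, 0 < c i) :
    ((#s : ℝ) - 1) / Q < ∑ i ∈ s, c i := by
  rcases s.eq_empty_or_nonempty with rfl | hne
  · simpa using div_neg_of_neg_of_pos neg_one_lt_zero hQ
  have hsum_pos : 0 < ∑ i ∈ s, c i := sum_pos hpos hne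
  have hbound := card_sub_one_mul_le_sum_of_sum_max_le_one hcstar hX s
  rcases (Nat.one_le_cast.mpr hne.card_pos : (1 : ℝ) ≤ #s).eq_or_lt with hone | htwo
  · rw [← hone, sub_self, zero_div]
    exact hsum_pos
  · calc ((#s : ℝ) - 1) / Q = ((#s : ℝ) - 1) * (1 / Q) := by ring
      _ < ((#s : ℝ) - 1) * cstar := mul_lt_mul_of_pos_left hQcstar (by linarith)
      _ ≤ ∑ i ∈ s, c i := hbound

theorem sum_lt_of_card_sub_one_div_lt_sum [Fintype ι] {c q : ι → ℝ} {Q : ℝ} (hQ : 0 < Q)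
    {s : Finset ι} (hs : ((#s : ℝ) - 1) / Q < ∑ i ∈ s, c i)
    (hq : ∀ i ∈ s, q i ≤ Q - c i * Q ^ 2) (hq_out : ∀ i ∉ s, q i = 0) :
    ∑ i, q i < Q := by
  have hs' : (#s : ℝ) - 1 < Q * ∑ i ∈ s, c i := by
    rwa [div_lt_iff₀ hQ, mul_comm] at hs
  calc ∑ i, q i = ∑ i ∈ s, q i :=
        (sum_subset (subset_univ s) fun i _ hi => hq_out i hi).symm
    _ ≤ ∑ i ∈ s, (Q - c i * Q ^ 2) := sum_le_sum hq
    _ = #s * Q - Q * (Q * ∑ i ∈ s, c i) := by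
        rw [sum_sub_distrib, ← sum_mul, sum_const, nsmul_eq_mul]; ring
    _ < Q := by nlinarith

open Classical in
theorem no_equilibrium_at_Q_when_cstar_large_general (m : ℕ) (Q : ℝ) (hQ : 0 < Q)
    (cs : Fin m → ℝ) (hpos : ∀ i, 0 < cs i)
    (cstar : ℝ) (hcpos : 0 < cstar)
    (hX1 : ∑ i, max (1 - cs i / cstar) 0 = 1) (hcstar : 1 / Q < cstar) :
    (((Finset.univ.filter fun i => cs i < 1 / Q).card : ℝ) - 1) / Q
        < ∑ i ∈ Finset.univ.filter (fun i => cs i < 1 / Q), cs i ∧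
    ∀ q : Fin m → ℝ, (∀ i, 0 ≤ q i) →
      (∀ i, cs i < 1 / Q → q i ≤ Q - cs i * Q ^ 2) →
      (∀ i, 1 / Q ≤ cs i → q i = 0) →
      ∑ i, q i ≠ Q := by
  have hS := card_sub_one_div_lt_sum hQ hcpos hX1.le hcstar
    (s := univ.filter fun i => cs i < 1 / Q) fun i _ => hpos i
  refine ⟨hS, fun q _ hq hq_out => ne_of_lt ?_⟩
  refine sum_lt_of_card_sub_one_div_lt_sum hQ hS (fun i hi => hq i ((mem_filter_univ i).mp hi))
    fun i hi => hq_out i ?_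
  simpa using hi

open Classical in
/-- If `c* > 1/Q` (where `X(c*) = 1`) then there is no HaPPY-Mine equilibrium
with total hashrate `Q`: letting `n` be the number of miners with `cᵢ < 1/Q`,
we get `(n-1)/Q < Σ_{cᵢ<1/Q} cᵢ`, whereas an equilibrium at total hashrate `Q`
(in which exactly the miners with `cᵢ < 1/Q` participate, each with
`qᵢ ≤ Q - cᵢQ²`) would require the opposite inequality. -/
theorem no_equilibrium_at_Q_when_cstar_large (m : ℕ) (Q : ℝ) (hQ : 0 < Q)
    (cs : Fin m → ℝ) (hpos : ∀ i, 0 < cs i) (hmono : Monotone cs)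
    (cstar : ℝ) (hcpos : 0 < cstar)
    (hX1 : ∑ i, max (1 - cs i / cstar) 0 = 1) (hcstar : 1 / Q < cstar) :
    (((Finset.univ.filter fun i => cs i < 1 / Q).card : ℝ) - 1) / Q
        < ∑ i ∈ Finset.univ.filter (fun i => cs i < 1 / Q), cs i ∧
    ∀ q : Fin m → ℝ, (∀ i, 0 ≤ q i) →
      (∀ i, cs i < 1 / Q → q i ≤ Q - cs i * Q ^ 2) →
      (∀ i, 1 / Q ≤ cs i → q i = 0) →
      ∑ i, q i ≠ Q :=
  no_equilibrium_at_Q_when_cstar_large_general m Q hQ cs hpos cstar hcpos hX1 hcstar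
end

section
/- Let m miners have uniform cost c and suppose the static-reward equilibrium gives each miner utility 1/m². If k miners collude (forming one miner among m-k+1 total, with colluding per-miner utility 1/(k(m-k+1)²)), then 1/(k(m-k+1)²) ≥ 1/m² implies k ≥ m - (1/2)√(4m+1) + 1/2, and in particular k > m/2. -/
/-!
Write `s = m - k`, so that `m = k + s` and profitability reads `k (s + 1)² ≤ (k + s)²`.
The difference of the two sides factors as `(k - 1)(k - s²)`, so for `k > 1` profitability
is exactly `s² ≤ k`. That is the quadratic inequality `(2s + 1)² ≤ 4m + 1`, giving the
square-root bound, and `s² ≤ k < k²` gives `s < k`, i.e. `m < 2k`.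
-/

theorem sq_le_of_mul_add_one_sq_le_add_sq {R : Type*} [CommRing R] [LinearOrder R]
    [IsStrictOrderedRing R] {k s : R} (hk : 1 < k) (h : k * (s + 1) ^ 2 ≤ (k + s) ^ 2) :
    s ^ 2 ≤ k := by
  have hfactor : 0 ≤ (k - 1) * (k - s ^ 2) := by linear_combination h
  exact sub_nonneg.mp (nonneg_of_mul_nonneg_right hfactor (sub_pos.mpr hk))

theorem two_mul_sub_add_one_le_sqrt {x y : ℝ} (h : (x - y) ^ 2 ≤ y) :
    2 * (x - y) + 1 ≤ √(4 * x + 1) :=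
  (le_abs_self _).trans (Real.abs_le_sqrt (by linear_combination 4 * h))

theorem sub_lt_of_sq_sub_le {x y : ℝ} (hy : 1 < y) (h : (x - y) ^ 2 ≤ y) : x - y < y :=
  (le_abs_self _).trans_lt <|
    abs_lt_of_sq_lt_sq (h.trans_lt (lt_self_pow₀ hy one_lt_two)) (by linarith)

theorem collusion_requires_majority_general (m k : ℕ) (hm : 2 ≤ m) (hk2 : 2 ≤ k)
    (hprofit : (1 : ℝ) / (m : ℝ) ^ 2
      ≤ 1 / ((k : ℝ) * ((m : ℝ) - (k : ℝ) + 1) ^ 2)) :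
    (m : ℝ) - (1 / 2) * Real.sqrt (4 * (m : ℝ) + 1) + 1 / 2 ≤ (k : ℝ) ∧
    (m : ℝ) / 2 < (k : ℝ) := by
  have hm_pos : (0 : ℝ) < (m : ℝ) ^ 2 := by
    have : (0 : ℝ) < m := by exact_mod_cast (by omega : 0 < m)
    positivity
  have hk : (1 : ℝ) < k := by exact_mod_cast hk2
  have hcost : (k : ℝ) * ((m - k) + 1) ^ 2 ≤ (k + (m - k)) ^ 2 := by
    rw [add_sub_cancel]
    exact le_of_one_div_le_one_div hm_pos hprofit
  have hsq : ((m : ℝ) - k) ^ 2 ≤ k := sq_le_of_mul_add_one_sq_le_add_sq hk hcost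
  constructor
  · linarith [two_mul_sub_add_one_le_sqrt hsq]
  · linarith [sub_lt_of_sq_sub_le hk hsq]

/-- For `m` homogeneous miners with static-reward equilibrium utility `1/m²`,
if `k` miners (`2 ≤ k ≤ m`) collude so that each colluder receives
`1/(k(m-k+1)²)`, then collusion being (weakly) profitable,
`1/(k(m-k+1)²) ≥ 1/m²`, forces `k ≥ m - (1/2)√(4m+1) + 1/2`, and in
particular `k > m/2`. -/
theorem collusion_requires_majority (m k : ℕ) (hm : 2 ≤ m) (hk2 : 2 ≤ k)
    (hkm : k ≤ m)
    (hprofit : (1 : ℝ) / (m : ℝ) ^ 2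
      ≤ 1 / ((k : ℝ) * ((m : ℝ) - (k : ℝ) + 1) ^ 2)) :
    (m : ℝ) - (1 / 2) * Real.sqrt (4 * (m : ℝ) + 1) + 1 / 2 ≤ (k : ℝ) ∧
    (m : ℝ) / 2 < (k : ℝ) :=
  collusion_requires_majority_general m k hm hk2 hprofit
end
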